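/- Let k ∈ ℕ⁺, γ ∈ (0,1), n ∈ ℕ. Consider two chunk-level policies π1^k, π2^k evaluated in chunk-level world models T1^k, T2^k respectively, under an n-chunk branched rollout: before the branch point, the processes use 'pre' policies and dynamics, and after the branch point they use 'post' policies and dynamics for n macro-steps. Assume per-step rewards lie in [0, r_max]. Suppose sup_t E_{s∼d_t^{π1^k}}[ D_TV(T1^{k,pre}(·|s, ã), T2^{k,pre}(·|s, ã)) ] ≤ ε_m^{k,pre} and analogously ≤ ε_m^{k,post} after the branch, and the policy total variation divergences are bounded by ε_π^{k,pre} before and ε_π^{k,post} after the branch. Then |V(π1^k) − V(π2^k)| ≤ (2 r_max/(1 − γ)) · [ n ε_m^{k,post} + (n+1) ε_π^{k,post} + ((γ^k)^{n+1}/(1 − γ^k)) (ε_m^{k,pre} + ε_π^{k,pre}) + (γ^k)^n ε_π^{k,pre} ]. -/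

import Mathlib

open MeasureTheory ProbabilityTheory

/-- Total variation distance between two measures:
`D_TV(μ, ν) = sup_{A measurable} |μ(A) − ν(A)|`. -/
noncomputable def tvDist {S : Type*} [MeasurableSpace S] (μ ν : Measure S) : ℝ :=
  ⨆ A : {A : Set S // MeasurableSet A}, |(μ A.1).toReal - (ν A.1).toReal|

/-- The joint state–action distribution obtained from a state distribution `μ`
and a (chunk-level) policy `π`. -/
noncomputable def saDist {S Act : Type*} [MeasurableSpace S] [MeasurableSpace Act]
    (μ : Measure S) (π : S → Measure Act) : Measure (S × Act) :=
  μ.bind (fun s => (π s).map (fun a => (s, a)))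

/-- The state distribution at macro-step `t` of a (possibly time-inhomogeneous) process
with initial state distribution `μ0`, policies `π t` and transition kernels `T t`. -/
noncomputable def stateDist {S Act : Type*} [MeasurableSpace S] [MeasurableSpace Act]
    (μ0 : Measure S) (π : ℕ → S → Measure Act) (T : ℕ → S × Act → Measure S) :
    ℕ → Measure S
  | 0 => μ0
  | t + 1 => (saDist (stateDist μ0 π T t) (π t)).bind (T t)

/-- The discounted occupancy measure `d = (1 − β) Σ_{t≥0} β^t d_t`. -/
noncomputable def occ {X : Type*} [MeasurableSpace X] (β : ℝ) (d : ℕ → Measure X) :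
    Measure X :=
  Measure.sum fun t => ENNReal.ofReal ((1 - β) * β ^ t) • d t

/-- The state–action distribution at macro-step `t` of the process
`(μ0, π, T)`. -/
noncomputable def saDistAt {S Act : Type*} [MeasurableSpace S] [MeasurableSpace Act]
    (μ0 : Measure S) (π : ℕ → S → Measure Act) (T : ℕ → S × Act → Measure S)
    (t : ℕ) : Measure (S × Act) :=
  saDist (stateDist μ0 π T t) (π t)

/-- The expected discounted return `V = (1/(1 − β)) ∫ r̃ d d^π`, where `d^π` is the
discounted state–action occupancy measure of the process `(μ0, π, T)` and `β` the
macro-step discount factor. -/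
noncomputable def value {S Act : Type*} [MeasurableSpace S] [MeasurableSpace Act]
    (β : ℝ) (rew : S × Act → ℝ)
    (μ0 : Measure S) (π : ℕ → S → Measure Act) (T : ℕ → S × Act → Measure S) : ℝ :=
  (1 - β)⁻¹ * ∫ p, rew p ∂(occ β (saDistAt μ0 π T))


/-!
Run the two rollouts side by side. One macro-step increases the total variation distance
between the state distributions by at most the policy divergence plus the expected dynamics
divergence, so at macro-step `t` the state–action distributions are within
`n (ε_m^post + ε_π^post) + ε_π^post + (t - n) (ε_m^pre + ε_π^pre) + [n ≤ t] ε_π^pre`.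
For an integrand with values in `[0, C]` the integrals against two probability measures differ
by at most `C` times their total variation distance (Hahn decomposition), and the chunk reward
is bounded by `C = r_max (1 - γ^k) / (1 - γ)`. Summing the per-step bounds against the discount
weights `(γ^k)^t` gives the claim.
-/

open Set

section TotalVariation

variable {X Y : Type*} [MeasurableSpace X] [MeasurableSpace Y]

lemma tvDist_nonneg (μ ν : Measure X) : 0 ≤ tvDist μ ν :=
  Real.iSup_nonneg fun _ => abs_nonneg _

lemma abs_measureReal_sub_le_one (μ ν : Measure X) [IsProbabilityMeasure μ]
    [IsProbabilityMeasure ν] (A : Set X) : |μ.real A - ν.real A| ≤ 1 :=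
  abs_sub_le_of_nonneg_of_le measureReal_nonneg measureReal_le_one measureReal_nonneg
    measureReal_le_one

lemma abs_measureReal_sub_le_tvDist (μ ν : Measure X) [IsProbabilityMeasure μ]
    [IsProbabilityMeasure ν] {A : Set X} (hA : MeasurableSet A) :
    |μ.real A - ν.real A| ≤ tvDist μ ν :=
  le_ciSup (f := fun A : {A : Set X // MeasurableSet A} => |μ.real A - ν.real A|)
    ⟨1, forall_mem_range.2 fun B => abs_measureReal_sub_le_one μ ν B⟩ ⟨A, hA⟩

lemma tvDist_le_one (μ ν : Measure X) [IsProbabilityMeasure μ] [IsProbabilityMeasure ν] :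
    tvDist μ ν ≤ 1 :=
  Real.iSup_le (fun B => abs_measureReal_sub_le_one μ ν B) zero_le_one

lemma tvDist_self (μ : Measure X) : tvDist μ μ = 0 :=
  le_antisymm (Real.iSup_le (fun _ => by simp) le_rfl) (tvDist_nonneg μ μ)

lemma tvDist_map_le (μ ν : Measure X) [IsProbabilityMeasure μ] [IsProbabilityMeasure ν]
    {f : X → Y} (hf : Measurable f) : tvDist (μ.map f) (ν.map f) ≤ tvDist μ ν :=
  Real.iSup_le (fun ⟨A, hA⟩ => by
    rw [Measure.map_apply hf hA, Measure.map_apply hf hA]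
    exact abs_measureReal_sub_le_tvDist μ ν (hf hA)) (tvDist_nonneg μ ν)

lemma tvDist_le_iSup_tvDist {ι : Type*} (κ η : ι → Measure X) [∀ i, IsProbabilityMeasure (κ i)]
    [∀ i, IsProbabilityMeasure (η i)] (i : ι) :
    tvDist (κ i) (η i) ≤ ⨆ i, tvDist (κ i) (η i) :=
  le_ciSup ⟨1, forall_mem_range.2 fun i => tvDist_le_one (κ i) (η i)⟩ i

lemma iSup_tvDist_le_one {ι : Type*} (κ η : ι → Measure X) [∀ i, IsProbabilityMeasure (κ i)]
    [∀ i, IsProbabilityMeasure (η i)] : ⨆ i, tvDist (κ i) (η i) ≤ 1 :=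
  Real.iSup_le (fun i => tvDist_le_one (κ i) (η i)) zero_le_one

lemma integrable_of_nonneg_of_le {μ : Measure X} [IsFiniteMeasure μ] {g : X → ℝ} {C : ℝ}
    (hg : Measurable g) (h0 : ∀ x, 0 ≤ g x) (hC : ∀ x, g x ≤ C) : Integrable g μ :=
  .of_bound hg.aestronglyMeasurable C <| ae_of_all _ fun x => by
    rw [Real.norm_eq_abs, abs_of_nonneg (h0 x)]; exact hC x

lemma integral_sub_integral_le_of_le {μ ν : Measure X} [IsFiniteMeasure μ] (hνμ : ν ≤ μ)
    {g : X → ℝ} {C : ℝ} (hg : Measurable g) (h0 : ∀ x, 0 ≤ g x) (hC : ∀ x, g x ≤ C) :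
    ∫ x, g x ∂μ - ∫ x, g x ∂ν ≤ C * (μ.real univ - ν.real univ) := by
  have := isFiniteMeasure_of_le μ hνμ
  have hgμ : Integrable g μ := integrable_of_nonneg_of_le hg h0 hC
  have hgν : Integrable g ν := integrable_of_nonneg_of_le hg h0 hC
  -- monotonicity in the measure, applied to the nonnegative function `C - g`
  have h := integral_mono_measure hνμ (f := fun x => C - g x)
    (ae_of_all _ fun x => sub_nonneg.2 (hC x)) ((integrable_const C).sub hgμ)
  rw [integral_sub (integrable_const C) hgμ, integral_sub (integrable_const C) hgν,
    integral_const, integral_const, smul_eq_mul, smul_eq_mul] at h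
  linarith

lemma abs_integral_sub_le_mul_tvDist (μ ν : Measure X) [IsProbabilityMeasure μ]
    [IsProbabilityMeasure ν] {g : X → ℝ} {C : ℝ} (hg : Measurable g) (h0 : ∀ x, 0 ≤ g x)
    (hC : ∀ x, g x ≤ C) : |∫ x, g x ∂μ - ∫ x, g x ∂ν| ≤ C * tvDist μ ν := by
  have hC0 : 0 ≤ C := (h0 _).trans (hC (nonempty_of_isProbabilityMeasure μ).some)
  obtain ⟨s, hs, hνμ, hμν⟩ := hahn_decomposition μ ν
  have hle : ν.restrict s ≤ μ.restrict s := Measure.le_iff.2 fun A hA => by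
    simpa only [Measure.restrict_apply hA] using hνμ _ (hA.inter hs) inter_subset_right
  have hle' : μ.restrict sᶜ ≤ ν.restrict sᶜ := Measure.le_iff.2 fun A hA => by
    simpa only [Measure.restrict_apply hA] using hμν _ (hA.inter hs.compl) inter_subset_right
  have h_s := integral_sub_integral_le_of_le hle hg h0 hC
  have h_sc := integral_sub_integral_le_of_le hle' hg h0 hC
  have h_s0 := integral_mono_measure hle (ae_of_all _ h0) (integrable_of_nonneg_of_le hg h0 hC)
  have h_sc0 := integral_mono_measure hle' (ae_of_all _ h0) (integrable_of_nonneg_of_le hg h0 hC)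
  simp only [measureReal_restrict_apply_univ] at h_s h_sc
  have tv_s := (le_abs_self _).trans (abs_measureReal_sub_le_tvDist μ ν hs)
  have tv_sc := (neg_le_abs _).trans (abs_measureReal_sub_le_tvDist μ ν hs.compl)
  have := mul_le_mul_of_nonneg_left tv_s hC0
  have := mul_le_mul_of_nonneg_left tv_sc hC0
  rw [← integral_add_compl hs (integrable_of_nonneg_of_le (μ := μ) hg h0 hC),
    ← integral_add_compl hs (integrable_of_nonneg_of_le (μ := ν) hg h0 hC), abs_le]
  constructor <;> linarith

end TotalVariation

section Composition

variable {X Y : Type*} [MeasurableSpace X] [MeasurableSpace Y]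

lemma measureReal_bind {ρ : Measure X} {κ : X → Measure Y} (hκ : Measurable κ)
    [∀ x, IsFiniteMeasure (κ x)] {A : Set Y} (hA : MeasurableSet A) :
    (ρ.bind κ).real A = ∫ x, (κ x).real A ∂ρ := by
  rw [measureReal_def, Measure.bind_apply hA hκ.aemeasurable]
  exact (integral_toReal ((Measure.measurable_coe hA).comp hκ).aemeasurable
    (ae_of_all _ fun x => measure_lt_top _ _)).symm

lemma tvDist_bind_le {ρ₁ ρ₂ : Measure X} [IsProbabilityMeasure ρ₁] [IsProbabilityMeasure ρ₂]
    {κ η : X → Measure Y} (hκ : Measurable κ) (hη : Measurable η)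
    [∀ x, IsProbabilityMeasure (κ x)] [∀ x, IsProbabilityMeasure (η x)] {G : X → ℝ}
    (hG : Integrable G ρ₁) (hκη : ∀ x, tvDist (κ x) (η x) ≤ G x) :
    tvDist (ρ₁.bind κ) (ρ₂.bind η) ≤ tvDist ρ₁ ρ₂ + ∫ x, G x ∂ρ₁ := by
  have hG0 : ∀ x, 0 ≤ G x := fun x => (tvDist_nonneg _ _).trans (hκη x)
  refine Real.iSup_le (fun ⟨A, hA⟩ => ?_) (add_nonneg (tvDist_nonneg _ _) (integral_nonneg hG0))
  have hκA : Measurable fun x => (κ x).real A :=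
    ((Measure.measurable_coe hA).comp hκ).ennreal_toReal
  have hηA : Measurable fun x => (η x).real A :=
    ((Measure.measurable_coe hA).comp hη).ennreal_toReal
  change |(ρ₁.bind κ).real A - (ρ₂.bind η).real A| ≤ _
  rw [measureReal_bind hκ hA, measureReal_bind hη hA]
  have h_kernel : |∫ x, (κ x).real A ∂ρ₁ - ∫ x, (η x).real A ∂ρ₁| ≤ ∫ x, G x ∂ρ₁ := by
    rw [← integral_sub (integrable_of_nonneg_of_le hκA (fun _ => measureReal_nonneg)
      (fun _ => measureReal_le_one)) (integrable_of_nonneg_of_le hηA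
      (fun _ => measureReal_nonneg) (fun _ => measureReal_le_one))]
    exact abs_integral_le_integral_abs.trans <| integral_mono_of_nonneg
      (ae_of_all _ fun _ => abs_nonneg _) hG
      (ae_of_all _ fun x => (abs_measureReal_sub_le_tvDist _ _ hA).trans (hκη x))
  have h_init : |∫ x, (η x).real A ∂ρ₁ - ∫ x, (η x).real A ∂ρ₂| ≤ tvDist ρ₁ ρ₂ := by
    simpa using abs_integral_sub_le_mul_tvDist ρ₁ ρ₂ hηA (fun _ => measureReal_nonneg)
      (fun _ => measureReal_le_one)
  linarith [abs_sub_le (∫ x, (κ x).real A ∂ρ₁) (∫ x, (η x).real A ∂ρ₁) (∫ x, (η x).real A ∂ρ₂)]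

instance isMarkovKernel_mk {π : X → Measure Y} (hπ : Measurable π)
    [∀ x, IsProbabilityMeasure (π x)] : IsMarkovKernel (⟨π, hπ⟩ : Kernel X Y) :=
  ⟨fun x => inferInstanceAs (IsProbabilityMeasure (π x))⟩

lemma saDist_eq_compProd (μ : Measure X) [SFinite μ] {π : X → Measure Y} (hπ : Measurable π)
    [∀ x, IsProbabilityMeasure (π x)] : saDist μ π = μ ⊗ₘ (⟨π, hπ⟩ : Kernel X Y) := by
  rw [Measure.compProd_eq_comp_prod, saDist]
  refine congrArg (Measure.bind μ) (funext fun x => ?_)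
  rw [Kernel.prod_apply, Kernel.id_apply, Measure.dirac_prod]
  rfl

variable {μ ν : Measure X} {π π₁ π₂ : X → Measure Y}

lemma isProbabilityMeasure_saDist [IsProbabilityMeasure μ] (hπ : Measurable π)
    [∀ x, IsProbabilityMeasure (π x)] : IsProbabilityMeasure (saDist μ π) := by
  rw [saDist_eq_compProd μ hπ]
  infer_instance

lemma integral_fst_saDist [IsProbabilityMeasure μ] (hπ : Measurable π)
    [∀ x, IsProbabilityMeasure (π x)] {f : X → ℝ} (hf : Measurable f) :
    ∫ p, f p.1 ∂saDist μ π = ∫ x, f x ∂μ := by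
  rw [← integral_map measurable_fst.aemeasurable hf.aestronglyMeasurable,
    saDist_eq_compProd μ hπ, ← Measure.fst, Measure.fst_compProd]

lemma tvDist_saDist_le [IsProbabilityMeasure μ] [IsProbabilityMeasure ν] (hπ₁ : Measurable π₁)
    (hπ₂ : Measurable π₂) [∀ x, IsProbabilityMeasure (π₁ x)] [∀ x, IsProbabilityMeasure (π₂ x)]
    {ε : ℝ} (hε : ∀ x, tvDist (π₁ x) (π₂ x) ≤ ε) :
    tvDist (saDist μ π₁) (saDist ν π₂) ≤ tvDist μ ν + ε := by
  rw [saDist_eq_compProd μ hπ₁, saDist_eq_compProd ν hπ₂, Measure.compProd_eq_comp_prod,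
    Measure.compProd_eq_comp_prod]
  refine (tvDist_bind_le (Kernel.measurable _) (Kernel.measurable _) (integrable_const ε)
    fun x => ?_).trans_eq (by simp)
  simp only [Kernel.prod_apply, Kernel.id_apply, Measure.dirac_prod]
  exact (tvDist_map_le _ _ measurable_prodMk_left).trans (hε x)

end Composition

section Rollout

variable {S Act : Type*} [MeasurableSpace S] [MeasurableSpace Act]

structure IsMarkovRollout (π : ℕ → S → Measure Act) (T : ℕ → S × Act → Measure S) : Prop where
  measurable_policy : ∀ t, Measurable (π t)
  measurable_transition : ∀ t, Measurable (T t)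
  isProbabilityMeasure_policy : ∀ t s, IsProbabilityMeasure (π t s)
  isProbabilityMeasure_transition : ∀ t p, IsProbabilityMeasure (T t p)

lemma IsMarkovRollout.branch {πpost πpre : S → Measure Act} {Tpost Tpre : S × Act → Measure S}
    (hπpost : Measurable πpost) (hπpre : Measurable πpre) (hTpost : Measurable Tpost)
    (hTpre : Measurable Tpre) [∀ s, IsProbabilityMeasure (πpost s)]
    [∀ s, IsProbabilityMeasure (πpre s)] [∀ p, IsProbabilityMeasure (Tpost p)]
    [∀ p, IsProbabilityMeasure (Tpre p)] (n : ℕ) :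
    IsMarkovRollout (fun t => if t < n then πpost else πpre)
      (fun t => if t < n then Tpost else Tpre) where
  measurable_policy t := by split_ifs <;> assumption
  measurable_transition t := by split_ifs <;> assumption
  isProbabilityMeasure_policy t := by split_ifs <;> assumption
  isProbabilityMeasure_transition t := by split_ifs <;> assumption

variable {μ0 : Measure S} [IsProbabilityMeasure μ0] {π π₁ π₂ : ℕ → S → Measure Act}
  {T T₁ T₂ : ℕ → S × Act → Measure S}

namespace IsMarkovRollout

lemma isProbabilityMeasure_stateDist (h : IsMarkovRollout π T) (t : ℕ) :
    IsProbabilityMeasure (stateDist μ0 π T t) := by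
  have := h.isProbabilityMeasure_policy
  have := h.isProbabilityMeasure_transition
  induction t with
  | zero => assumption
  | succ t ih =>
    have := isProbabilityMeasure_saDist (μ := stateDist μ0 π T t) (h.measurable_policy t)
    exact isProbabilityMeasure_bind (h.measurable_transition t).aemeasurable
      (ae_of_all _ inferInstance)

lemma isProbabilityMeasure_saDistAt (h : IsMarkovRollout π T) (t : ℕ) :
    IsProbabilityMeasure (saDistAt μ0 π T t) :=
  have := h.isProbabilityMeasure_policy
  have := h.isProbabilityMeasure_stateDist (μ0 := μ0) t
  isProbabilityMeasure_saDist (h.measurable_policy t)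

lemma tvDist_stateDist_le (h₁ : IsMarkovRollout π₁ T₁) (h₂ : IsMarkovRollout π₂ T₂)
    {eπ em : ℕ → ℝ} (hπ : ∀ t s, tvDist (π₁ t s) (π₂ t s) ≤ eπ t)
    (hmeas : ∀ t, Measurable fun s => ⨆ a, tvDist (T₁ t (s, a)) (T₂ t (s, a)))
    (hem : ∀ t, ∫ s, (⨆ a, tvDist (T₁ t (s, a)) (T₂ t (s, a))) ∂(stateDist μ0 π₁ T₁ t) ≤ em t)
    (t : ℕ) :
    tvDist (stateDist μ0 π₁ T₁ t) (stateDist μ0 π₂ T₂ t) ≤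
      ∑ u ∈ Finset.range t, (eπ u + em u) := by
  have := h₁.isProbabilityMeasure_policy
  have := h₂.isProbabilityMeasure_policy
  have := h₁.isProbabilityMeasure_transition
  have := h₂.isProbabilityMeasure_transition
  induction t with
  | zero => simp [stateDist, tvDist_self]
  | succ t ih =>
    set ν₁ := stateDist μ0 π₁ T₁ t
    set ν₂ := stateDist μ0 π₂ T₂ t
    have := h₁.isProbabilityMeasure_stateDist (μ0 := μ0) t
    have := h₂.isProbabilityMeasure_stateDist (μ0 := μ0) t
    have := isProbabilityMeasure_saDist (μ := ν₁) (h₁.measurable_policy t)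
    have := isProbabilityMeasure_saDist (μ := ν₂) (h₂.measurable_policy t)
    have h_transition := tvDist_bind_le (ρ₁ := saDist ν₁ (π₁ t)) (ρ₂ := saDist ν₂ (π₂ t))
      (h₁.measurable_transition t) (h₂.measurable_transition t)
      (G := fun p => ⨆ a, tvDist (T₁ t (p.1, a)) (T₂ t (p.1, a)))
      (integrable_of_nonneg_of_le ((hmeas t).comp measurable_fst)
        (fun _ => Real.iSup_nonneg fun _ => tvDist_nonneg _ _) (fun _ => iSup_tvDist_le_one _ _))
      fun p => tvDist_le_iSup_tvDist (fun a => T₁ t (p.1, a)) (fun a => T₂ t (p.1, a)) p.2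
    have h_policy := tvDist_saDist_le (μ := ν₁) (ν := ν₂) (h₁.measurable_policy t)
      (h₂.measurable_policy t) (hπ t)
    rw [integral_fst_saDist (h₁.measurable_policy t) (hmeas t)] at h_transition
    refine h_transition.trans ?_
    rw [Finset.sum_range_succ]
    linarith [hem t]

lemma tvDist_saDistAt_le (h₁ : IsMarkovRollout π₁ T₁) (h₂ : IsMarkovRollout π₂ T₂)
    {eπ em : ℕ → ℝ} (hπ : ∀ t s, tvDist (π₁ t s) (π₂ t s) ≤ eπ t)
    (hmeas : ∀ t, Measurable fun s => ⨆ a, tvDist (T₁ t (s, a)) (T₂ t (s, a)))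
    (hem : ∀ t, ∫ s, (⨆ a, tvDist (T₁ t (s, a)) (T₂ t (s, a))) ∂(stateDist μ0 π₁ T₁ t) ≤ em t)
    (t : ℕ) :
    tvDist (saDistAt μ0 π₁ T₁ t) (saDistAt μ0 π₂ T₂ t) ≤
      ∑ u ∈ Finset.range t, (eπ u + em u) + eπ t := by
  have := h₁.isProbabilityMeasure_policy
  have := h₂.isProbabilityMeasure_policy
  have := h₁.isProbabilityMeasure_stateDist (μ0 := μ0) t
  have := h₂.isProbabilityMeasure_stateDist (μ0 := μ0) t
  exact (tvDist_saDist_le (h₁.measurable_policy t) (h₂.measurable_policy t) (hπ t)).trans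
    (add_le_add_left (h₁.tvDist_stateDist_le h₂ hπ hmeas hem t) _)

end IsMarkovRollout

end Rollout

section Occupancy

variable {X : Type*} [MeasurableSpace X] {β : ℝ} {ρ ρ₁ ρ₂ : ℕ → Measure X}

lemma isProbabilityMeasure_occ (hβ0 : 0 ≤ β) (hβ1 : β < 1)
    [∀ t, IsProbabilityMeasure (ρ t)] : IsProbabilityMeasure (occ β ρ) := by
  constructor
  have hcoef : ∀ t, 0 ≤ (1 - β) * β ^ t := fun t => mul_nonneg (by linarith) (pow_nonneg hβ0 t)
  simp only [occ, Measure.sum_apply _ MeasurableSet.univ, Measure.smul_apply, measure_univ,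
    smul_eq_mul, mul_one]
  rw [← ENNReal.ofReal_tsum_of_nonneg hcoef
    ((summable_geometric_of_lt_one hβ0 hβ1).mul_left _), tsum_mul_left,
    tsum_geometric_of_lt_one hβ0 hβ1, mul_inv_cancel₀ (by linarith), ENNReal.ofReal_one]

lemma hasSum_integral_occ (hβ0 : 0 ≤ β) (hβ1 : β < 1) {g : X → ℝ}
    (hg : Integrable g (occ β ρ)) :
    HasSum (fun t => (1 - β) * β ^ t * ∫ x, g x ∂ρ t) (∫ x, g x ∂occ β ρ) := by
  have hcoef : ∀ t, 0 ≤ (1 - β) * β ^ t := fun t => mul_nonneg (by linarith) (pow_nonneg hβ0 t)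
  have h := hasSum_integral_measure hg
  simp only [integral_smul_measure, ENNReal.toReal_ofReal (hcoef _), smul_eq_mul] at h
  exact h

lemma abs_integral_occ_sub_le (hβ0 : 0 ≤ β) (hβ1 : β < 1) [∀ t, IsProbabilityMeasure (ρ₁ t)]
    [∀ t, IsProbabilityMeasure (ρ₂ t)] {g : X → ℝ} {C : ℝ} (hg : Measurable g)
    (h0 : ∀ x, 0 ≤ g x) (hC : ∀ x, g x ≤ C) {D : ℕ → ℝ} {Dsum : ℝ}
    (hD : ∀ t, tvDist (ρ₁ t) (ρ₂ t) ≤ D t) (hDsum : HasSum (fun t => β ^ t * D t) Dsum) :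
    |∫ x, g x ∂occ β ρ₁ - ∫ x, g x ∂occ β ρ₂| ≤ (1 - β) * C * Dsum := by
  have := isProbabilityMeasure_occ hβ0 hβ1 (ρ := ρ₁)
  have := isProbabilityMeasure_occ hβ0 hβ1 (ρ := ρ₂)
  have hC0 : 0 ≤ C := (h0 _).trans (hC (nonempty_of_isProbabilityMeasure (ρ₁ 0)).some)
  have h₁ := hasSum_integral_occ hβ0 hβ1 (ρ := ρ₁) (integrable_of_nonneg_of_le hg h0 hC)
  have h₂ := hasSum_integral_occ hβ0 hβ1 (ρ := ρ₂) (integrable_of_nonneg_of_le hg h0 hC)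
  refine (h₁.sub h₂).norm_le_of_bounded (hDsum.mul_left ((1 - β) * C)) fun t => ?_
  have hcoef : 0 ≤ (1 - β) * β ^ t := mul_nonneg (by linarith) (pow_nonneg hβ0 t)
  rw [Real.norm_eq_abs, ← mul_sub, abs_mul, abs_of_nonneg hcoef]
  calc (1 - β) * β ^ t * |∫ x, g x ∂ρ₁ t - ∫ x, g x ∂ρ₂ t|
      ≤ (1 - β) * β ^ t * (C * D t) := mul_le_mul_of_nonneg_left
        ((abs_integral_sub_le_mul_tvDist _ _ hg h0 hC).trans
          (mul_le_mul_of_nonneg_left (hD t) hC0)) hcoef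
    _ = (1 - β) * C * (β ^ t * D t) := by ring

end Occupancy

lemma IsMarkovRollout.abs_value_sub_le {S Act : Type*} [MeasurableSpace S] [MeasurableSpace Act]
    {μ0 : Measure S} [IsProbabilityMeasure μ0] {π₁ π₂ : ℕ → S → Measure Act}
    {T₁ T₂ : ℕ → S × Act → Measure S} (h₁ : IsMarkovRollout π₁ T₁)
    (h₂ : IsMarkovRollout π₂ T₂) {β : ℝ} (hβ0 : 0 ≤ β) (hβ1 : β < 1) {rew : S × Act → ℝ}
    {C : ℝ} (hrew : Measurable rew) (h0 : ∀ p, 0 ≤ rew p) (hC : ∀ p, rew p ≤ C)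
    {D : ℕ → ℝ} {Dsum : ℝ} (hD : ∀ t, tvDist (saDistAt μ0 π₁ T₁ t) (saDistAt μ0 π₂ T₂ t) ≤ D t)
    (hDsum : HasSum (fun t => β ^ t * D t) Dsum) :
    |value β rew μ0 π₁ T₁ - value β rew μ0 π₂ T₂| ≤ C * Dsum := by
  have := h₁.isProbabilityMeasure_saDistAt (μ0 := μ0)
  have := h₂.isProbabilityMeasure_saDistAt (μ0 := μ0)
  have hβ : 0 < 1 - β := sub_pos.2 hβ1
  rw [value, value, ← mul_sub, abs_mul, abs_of_pos (inv_pos.2 hβ)]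
  calc (1 - β)⁻¹ * |_ - _| ≤ (1 - β)⁻¹ * ((1 - β) * C * Dsum) := by
        gcongr; exact abs_integral_occ_sub_le hβ0 hβ1 hrew h0 hC hD hDsum
    _ = C * Dsum := by field_simp

lemma sum_range_ite_lt (n t : ℕ) (a b : ℝ) :
    ∑ u ∈ Finset.range t, (if u < n then a else b) = min t n * a + (t - n : ℕ) * b := by
  induction t with
  | zero => simp
  | succ t ih =>
    rw [Finset.sum_range_succ, ih]
    split_ifs with h
    · rw [Nat.sub_eq_zero_of_le h.le, Nat.sub_eq_zero_of_le h, min_eq_left h.le, min_eq_left h]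
      push_cast; ring
    · rw [min_eq_right (not_lt.1 h), min_eq_right (by omega), Nat.succ_sub (not_lt.1 h)]
      push_cast; ring

lemma sum_range_branch_add_le {n t : ℕ} {a a' b b' : ℝ} (ha : 0 ≤ a) (ha' : 0 ≤ a') :
    ∑ u ∈ Finset.range t, ((if u < n then a else b) + if u < n then a' else b') +
        (if t < n then a else b) ≤
      n * (a' + a) + a + ((t - n : ℕ) * (b' + b) + if n ≤ t then b else 0) := by
  simp only [ite_add_ite, sum_range_ite_lt]
  have hmin : (min t n : ℕ) * (a + a') ≤ n * (a + a') :=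
    mul_le_mul_of_nonneg_right (Nat.cast_le.2 (min_le_right t n)) (add_nonneg ha ha')
  split_ifs with h h' <;> first | omega | linarith

lemma hasSum_geometric_mul_tail {β : ℝ} (hβ0 : 0 ≤ β) (hβ1 : β < 1) (n : ℕ) (a b : ℝ) :
    HasSum (fun t : ℕ => β ^ t * ((t - n : ℕ) * a + if n ≤ t then b else 0))
      (β ^ n * (β / (1 - β) ^ 2 * a + (1 - β)⁻¹ * b)) := by
  have hβ : ‖β‖ < 1 := by rwa [Real.norm_eq_abs, abs_of_nonneg hβ0]
  rw [← hasSum_nat_add_iff' n, Finset.sum_eq_zero fun u hu => by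
    simp [Nat.sub_eq_zero_of_le (Finset.mem_range.1 hu).le, not_le.2 (Finset.mem_range.1 hu)],
    sub_zero]
  have e (m : ℕ) : β ^ (m + n) * (((m + n - n : ℕ) : ℝ) * a + if n ≤ m + n then b else 0) =
      β ^ n * (m * β ^ m * a + β ^ m * b) := by
    simp only [Nat.add_sub_cancel, le_add_iff_nonneg_left, zero_le, if_true, pow_add]
    ring
  simp only [e]
  exact (((hasSum_coe_mul_geometric_of_norm_lt_one hβ).mul_right a).add
    ((hasSum_geometric_of_lt_one hβ0 hβ1).mul_right b)).mul_left (β ^ n)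

lemma hasSum_geometric_mul_branch_bound {β : ℝ} (hβ0 : 0 ≤ β) (hβ1 : β < 1) (n : ℕ)
    (a a' b b' : ℝ) :
    HasSum (fun t : ℕ => β ^ t *
        (n * (a' + a) + a + ((t - n : ℕ) * (b' + b) + if n ≤ t then b else 0)))
      ((1 - β)⁻¹ * (n * a' + (n + 1) * a + β ^ (n + 1) / (1 - β) * (b' + b) + β ^ n * b)) := by
  have : 1 - β ≠ 0 := (sub_pos.2 hβ1).ne'
  rw [show (1 - β)⁻¹ * (n * a' + (n + 1) * a + β ^ (n + 1) / (1 - β) * (b' + b) + β ^ n * b) =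
      (1 - β)⁻¹ * (n * (a' + a) + a) + β ^ n * (β / (1 - β) ^ 2 * (b' + b) + (1 - β)⁻¹ * b) by
    field_simp; ring]
  exact (((hasSum_geometric_of_lt_one hβ0 hβ1).mul_right _).add
    (hasSum_geometric_mul_tail hβ0 hβ1 n (b' + b) b)).congr_fun fun t => by ring

/-- value divergence under an `n`-chunk branched rollout.
Each process `i ∈ {1,2}` performs a branched rollout: for the `n` macro-steps of the
branch it uses the "post"-branch pair `(π^post_i, T^post_i)`, and elsewhere (the part of
the rollout governed by the behavior data-collection process, whose errors are discounted
by at least `(γ^k)^{n+1}` in the return) it uses the "pre"-branch pair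
`(π^pre_i, T^pre_i)`.  Chunk rewards are bounded by `r_max (1 − γ^k)/(1 − γ)` (per-step
rewards in `[0, r_max]`).  If the pre- and post-branch dynamics discrepancies (in expectation
over the macro-step-`t` state distribution of process `1`, uniformly over chunk actions
and over `t`) are bounded by `ε_m^{k,pre}`, `ε_m^{k,post}`, and the pre- and post-branch
policy TV divergences are bounded by `ε_π^{k,pre}`, `ε_π^{k,post}`, then
`|V(π₁^k) − V(π₂^k)| ≤ (2 r_max/(1−γ)) [ n ε_m^{k,post} + (n+1) ε_π^{k,post}
   + ((γ^k)^{n+1}/(1−γ^k)) (ε_m^{k,pre} + ε_π^{k,pre}) + (γ^k)^n ε_π^{k,pre} ]`. -/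
theorem abs_value_sub_le_of_branched_rollout_errors
    {S Act : Type*} [MeasurableSpace S] [MeasurableSpace Act]
    (γ rmax : ℝ) (k : ℕ) (n : ℕ) (hγ0 : 0 < γ) (hγ1 : γ < 1) (hk : 1 ≤ k)
    (μ0 : Measure S) [IsProbabilityMeasure μ0]
    (πpre1 πpre2 πpost1 πpost2 : S → Measure Act)
    (Tpre1 Tpre2 Tpost1 Tpost2 : S × Act → Measure S)
    (hπpre1 : Measurable πpre1) (hπpre2 : Measurable πpre2)
    (hπpost1 : Measurable πpost1) (hπpost2 : Measurable πpost2)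
    (hTpre1 : Measurable Tpre1) (hTpre2 : Measurable Tpre2)
    (hTpost1 : Measurable Tpost1) (hTpost2 : Measurable Tpost2)
    (hπpre1p : ∀ s, IsProbabilityMeasure (πpre1 s))
    (hπpre2p : ∀ s, IsProbabilityMeasure (πpre2 s))
    (hπpost1p : ∀ s, IsProbabilityMeasure (πpost1 s))
    (hπpost2p : ∀ s, IsProbabilityMeasure (πpost2 s))
    (hTpre1p : ∀ p, IsProbabilityMeasure (Tpre1 p))
    (hTpre2p : ∀ p, IsProbabilityMeasure (Tpre2 p))
    (hTpost1p : ∀ p, IsProbabilityMeasure (Tpost1 p))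
    (hTpost2p : ∀ p, IsProbabilityMeasure (Tpost2 p))
    (rew : S × Act → ℝ) (hrew : Measurable rew)
    (hr0 : ∀ p, 0 ≤ rew p) (hr1 : ∀ p, rew p ≤ rmax * (1 - γ ^ k) / (1 - γ))
    (επpre επpost εmpre εmpost : ℝ)
    (hεπpre : ∀ s, tvDist (πpre1 s) (πpre2 s) ≤ επpre)
    (hεπpost : ∀ s, tvDist (πpost1 s) (πpost2 s) ≤ επpost)
    (hmeaspre : Measurable fun s : S => ⨆ a : Act, tvDist (Tpre1 (s, a)) (Tpre2 (s, a)))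
    (hmeaspost : Measurable fun s : S => ⨆ a : Act, tvDist (Tpost1 (s, a)) (Tpost2 (s, a)))
    (hεmpre : ∀ t : ℕ,
      ∫ s, (⨆ a : Act, tvDist (Tpre1 (s, a)) (Tpre2 (s, a)))
          ∂(stateDist μ0 (fun t => if t < n then πpost1 else πpre1)
              (fun t => if t < n then Tpost1 else Tpre1) t) ≤ εmpre)
    (hεmpost : ∀ t : ℕ,
      ∫ s, (⨆ a : Act, tvDist (Tpost1 (s, a)) (Tpost2 (s, a)))
          ∂(stateDist μ0 (fun t => if t < n then πpost1 else πpre1)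
              (fun t => if t < n then Tpost1 else Tpre1) t) ≤ εmpost) :
    |value (γ ^ k) rew μ0 (fun t => if t < n then πpost1 else πpre1)
        (fun t => if t < n then Tpost1 else Tpre1) -
      value (γ ^ k) rew μ0 (fun t => if t < n then πpost2 else πpre2)
        (fun t => if t < n then Tpost2 else Tpre2)|
      ≤ 2 * rmax / (1 - γ) *
          (n * εmpost + (n + 1) * επpost +
            (γ ^ k) ^ (n + 1) / (1 - γ ^ k) * (εmpre + επpre) + (γ ^ k) ^ n * επpre) := by
  have hβ0 : 0 < γ ^ k := pow_pos hγ0 k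
  have hβ1 : γ ^ k < 1 := pow_lt_one₀ hγ0.le hγ1 (by omega)
  have h₁ := IsMarkovRollout.branch hπpost1 hπpre1 hTpost1 hTpre1 n
  have h₂ := IsMarkovRollout.branch hπpost2 hπpre2 hTpost2 hTpre2 n
  obtain ⟨s₀⟩ := nonempty_of_isProbabilityMeasure μ0
  have hεπpost0 : 0 ≤ επpost := (tvDist_nonneg _ _).trans (hεπpost s₀)
  have hεmpost0 : 0 ≤ εmpost :=
    (integral_nonneg fun _ => Real.iSup_nonneg fun _ => tvDist_nonneg _ _).trans (hεmpost 0)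
  have hD (t : ℕ) := (h₁.tvDist_saDistAt_le (μ0 := μ0) h₂
      (eπ := fun t => if t < n then επpost else επpre)
      (em := fun t => if t < n then εmpost else εmpre)
      (fun t s => by split_ifs; exacts [hεπpost s, hεπpre s])
      (fun t => by by_cases h : t < n <;> simp only [h, if_true, if_false] <;> assumption)
      (fun t => by
        by_cases h : t < n <;> simp only [h, if_true, if_false]
        exacts [hεmpost t, hεmpre t]) t).trans
    (sum_range_branch_add_le hεπpost0 hεmpost0)
  have h := h₁.abs_value_sub_le h₂ hβ0.le hβ1 hrew hr0 hr1 hD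
    (hasSum_geometric_mul_branch_bound hβ0.le hβ1 n _ _ _ _)
  have : 1 - γ ≠ 0 := (sub_pos.2 hγ1).ne'
  have : 1 - γ ^ k ≠ 0 := (sub_pos.2 hβ1).ne'
  calc _ ≤ _ := h
    _ ≤ 2 * _ := le_mul_of_one_le_left ((abs_nonneg _).trans h) one_le_two
    _ = _ := by field_simp
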